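/- The signed sum over all permutations π ∈ S_n of sgn(π) times the number of π-families equals the number of disjoint n-families (a Lindström–Gessel–Viennot cancellation for Schröder-type paths). -/

import Mathlib

/-- A Schröder-type path from `src` to `tgt`. -/
def IsSchroderPath (p : List (ℤ × ℤ)) (src tgt : ℤ × ℤ) : Prop :=
  p.head? = some src ∧ p.getLast? = some tgt ∧
    p.Chain' fun u v => v - u = (0, 1) ∨ v - u = (-1, 1) ∨ v - u = (-1, 0)

/-!
If a family of paths has a common point, choose one such point `z` and two paths through it, and
exchange the tails of these two paths after `z`. Exchanging tails preserves the multiset of visited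
points and the set of paths through `z`, so the same choice is made for the new family: this is an
involution on meeting families that multiplies the permutation by a transposition, hence their
signed count vanishes. For `π ≠ 1` there are `i < j` with `π j < π i`; a Schröder path moves at
most one unit left or up per step, so the paths `(i,0) → (0,π i)` and `(j,0) → (0,π j)` cannot
pass each other without sharing a lattice point, and only the identity has disjoint families.
-/

namespace List

variable {α : Type*} [DecidableEq α]

theorem mem_takeWhile_ne {l : List α} {z w : α} (h : w ∈ l.takeWhile (· ≠ z)) : w ≠ z := by
  simpa using mem_takeWhile_imp h

theorem head?_dropWhile_ne {l : List α} {z : α} (h : z ∈ l) :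
    (l.dropWhile (· ≠ z)).head? = some z := by
  induction l with
  | nil => simp at h
  | cons a l ih =>
    by_cases ha : a = z
    · simp [ha]
    · simp_all [eq_comm]

theorem mem_dropWhile_ne_iff {l : List α} {z : α} : z ∈ l.dropWhile (· ≠ z) ↔ z ∈ l :=
  ⟨fun h => (dropWhile_suffix _).subset h, fun h => mem_of_mem_head? (head?_dropWhile_ne h)⟩

theorem takeWhile_ne_dropWhile_ne (l : List α) (z : α) :
    (l.dropWhile (· ≠ z)).takeWhile (· ≠ z) = [] := by
  have := l.head?_dropWhile_not (· ≠ z)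
  cases h : l.dropWhile (· ≠ z) with
  | nil => rfl
  | cons a r => simp_all

theorem dropWhile_ne_dropWhile_ne (l : List α) (z : α) :
    (l.dropWhile (· ≠ z)).dropWhile (· ≠ z) = l.dropWhile (· ≠ z) := by
  have := l.head?_dropWhile_not (· ≠ z)
  cases h : l.dropWhile (· ≠ z) with
  | nil => rfl
  | cons a r => simp_all

def spliceAt (p q : List α) (z : α) : List α :=
  p.takeWhile (· ≠ z) ++ q.dropWhile (· ≠ z)

@[simp]
theorem spliceAt_self (p : List α) (z : α) : p.spliceAt p z = p :=
  takeWhile_append_dropWhile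

theorem takeWhile_spliceAt (p q : List α) (z : α) :
    (p.spliceAt q z).takeWhile (· ≠ z) = p.takeWhile (· ≠ z) := by
  rw [spliceAt, takeWhile_append_of_pos (fun w hw => by simpa using mem_takeWhile_ne hw),
    takeWhile_ne_dropWhile_ne, append_nil]

theorem dropWhile_spliceAt (p q : List α) (z : α) :
    (p.spliceAt q z).dropWhile (· ≠ z) = q.dropWhile (· ≠ z) := by
  rw [spliceAt, dropWhile_append_of_pos (fun w hw => by simpa using mem_takeWhile_ne hw),
    dropWhile_ne_dropWhile_ne]

theorem spliceAt_spliceAt (p q r s : List α) (z : α) :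
    (p.spliceAt q z).spliceAt (r.spliceAt s z) z = p.spliceAt s z := by
  rw [spliceAt, takeWhile_spliceAt, dropWhile_spliceAt, spliceAt]

theorem mem_spliceAt_self {p q : List α} {z : α} : z ∈ p.spliceAt q z ↔ z ∈ q := by
  rw [spliceAt, mem_append, or_iff_right (fun h => mem_takeWhile_ne h rfl), mem_dropWhile_ne_iff]

theorem count_spliceAt (p q : List α) (z w : α) :
    (p.spliceAt q z).count w = (p.takeWhile (· ≠ z)).count w + (q.dropWhile (· ≠ z)).count w :=
  count_append

theorem head?_spliceAt {p q : List α} {z : α} (hp : z ∈ p) (hq : z ∈ q) :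
    (p.spliceAt q z).head? = p.head? := by
  conv_rhs => rw [← takeWhile_append_dropWhile (p := (· ≠ z)) (l := p)]
  rw [spliceAt, head?_append, head?_append, head?_dropWhile_ne hp, head?_dropWhile_ne hq]

theorem getLast?_spliceAt {p q : List α} {z : α} (hq : z ∈ q) :
    (p.spliceAt q z).getLast? = q.getLast? := by
  conv_rhs => rw [← takeWhile_append_dropWhile (p := (· ≠ z)) (l := q)]
  have hne : q.dropWhile (· ≠ z) ≠ [] := ne_nil_of_mem (mem_dropWhile_ne_iff.2 hq)
  rw [spliceAt, getLast?_append, getLast?_append, getLast?_eq_some_getLast hne]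
  rfl

theorem IsChain.spliceAt {R : α → α → Prop} {p q : List α} {z : α} (hp : IsChain R p)
    (hq : IsChain R q) (hzp : z ∈ p) (hzq : z ∈ q) : IsChain R (p.spliceAt q z) := by
  rw [← takeWhile_append_dropWhile (p := (· ≠ z)) (l := p), isChain_append] at hp
  refine isChain_append.2 ⟨hp.1, hq.suffix (dropWhile_suffix _), fun x hx y hy => ?_⟩
  rw [head?_dropWhile_ne hzq] at hy
  exact hp.2.2 x hx y (by rwa [head?_dropWhile_ne hzp])

end List

theorem List.IsChain.exists_rel_not_and {α : Type*} {R : α → α → Prop} {C : α → Prop}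
    {l : List α} (hl : IsChain R l) {a b : α} (ha : l.head? = some a) (hb : b ∈ l)
    (hCa : ¬C a) (hCb : C b) : ∃ u ∈ l, ∃ v ∈ l, R u v ∧ ¬C u ∧ C v := by
  by_contra! h
  refine ((hl.imp_of_mem_imp (S := fun u v => ¬C u → ¬C v) fun u v hu hv huv =>
    h u hu v hv huv).induction (¬C ·) l (fun _ _ h => h) (fun hne => ?_)) b hb hCb
  rwa [(head_eq_iff_head?_eq_some hne).2 ha]

theorem List.finite_setOf_nodup_forall_mem {α : Type*} {s : Set α} (hs : s.Finite) :
    {l : List α | l.Nodup ∧ ∀ x ∈ l, x ∈ s}.Finite := by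
  classical
  refine (hs.toFinset.powerset.finite_toSet.biUnion fun T _ =>
    T.toList.permutations.finite_toSet).subset ?_
  rintro l ⟨hnd, hl⟩
  simp only [Set.mem_iUnion]
  exact ⟨l.toFinset, Finset.mem_powerset.2 fun x hx => hs.mem_toFinset.2 (hl x (mem_toFinset.1 hx)),
    List.mem_permutations.2 (List.toFinset_toList hnd).symm⟩

theorem Set.Nonempty.some_eq_of_eq {β : Type*} {s t : Set β} (hs : s.Nonempty) (ht : t.Nonempty)
    (h : s = t) : hs.some = ht.some := by
  subst h; rfl

open Equiv Equiv.Perm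

section LGVInvolution

variable {ι α : Type*}

def meetingPairs (P : ι → List α) (w : α) : Set (ι × ι) :=
  {ij | ij.1 ≠ ij.2 ∧ w ∈ P ij.1 ∧ w ∈ P ij.2}

def commonPoints (P : ι → List α) : Set α :=
  {w | (meetingPairs P w).Nonempty}

theorem not_nonempty_commonPoints_iff {P : ι → List α} :
    ¬(commonPoints P).Nonempty ↔ ∀ i j, i ≠ j → ∀ x, x ∈ P i → x ∉ P j := by
  simp only [commonPoints, meetingPairs, Set.Nonempty, Set.mem_ofPred_eq, Prod.exists]
  grind

noncomputable def commonPair {P : ι → List α} (h : (commonPoints P).Nonempty) : ι × ι :=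
  (show (meetingPairs P h.some).Nonempty from h.some_mem).some

theorem commonPair_mem {P : ι → List α} (h : (commonPoints P).Nonempty) :
    commonPair h ∈ meetingPairs P h.some :=
  Set.Nonempty.some_mem _

theorem commonPair_eq_of_eq {P Q : ι → List α} (hP : (commonPoints P).Nonempty)
    (hQ : (commonPoints Q).Nonempty) (hC : commonPoints P = commonPoints Q)
    (hM : meetingPairs P hQ.some = meetingPairs Q hQ.some) : commonPair hP = commonPair hQ := by
  apply Set.Nonempty.some_eq_of_eq
  rw [Set.Nonempty.some_eq_of_eq hP hQ hC, hM]

variable [DecidableEq α]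

theorem mem_commonPoints_iff_one_lt_sum_count [Fintype ι] {P : ι → List α}
    (hP : ∀ k, (P k).Nodup) {w : α} : w ∈ commonPoints P ↔ 1 < ∑ k, (P k).count w := by
  have hcount (k : ι) : (P k).count w = if w ∈ P k then 1 else 0 := by
    split_ifs with h
    · exact List.count_eq_one_of_mem (hP k) h
    · exact List.count_eq_zero_of_not_mem h
  simp only [hcount, Finset.sum_boole, Nat.cast_id, Finset.one_lt_card, commonPoints,
    meetingPairs, Set.Nonempty, Prod.exists, Finset.mem_filter, Finset.mem_univ, true_and,
    Set.mem_ofPred_eq]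
  grind

variable [DecidableEq ι]

-- Paths other than `P i` and `P j` are kept, since `spliceAt p p z = p`.
def swapTails (P : ι → List α) (i j : ι) (z : α) : ι → List α :=
  fun k => (P k).spliceAt (P (swap i j k)) z

theorem swapTails_swapTails (P : ι → List α) (i j : ι) (z : α) :
    swapTails (swapTails P i j z) i j z = P := by
  funext k
  simp only [swapTails, List.spliceAt_spliceAt, swap_apply_self, List.spliceAt_self]

theorem mem_swapTails_self_iff {P : ι → List α} {i j k : ι} {z : α} :
    z ∈ swapTails P i j z k ↔ z ∈ P (swap i j k) :=
  List.mem_spliceAt_self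

theorem meetingPairs_swapTails {P : ι → List α} {i j : ι} {z : α} (hi : z ∈ P i)
    (hj : z ∈ P j) : meetingPairs (swapTails P i j z) z = meetingPairs P z := by
  have hmem (k : ι) : z ∈ swapTails P i j z k ↔ z ∈ P k := by
    rw [mem_swapTails_self_iff, swap_apply_def]
    split_ifs <;> simp_all
  ext
  simp only [meetingPairs, Set.mem_ofPred_eq, hmem]

theorem sum_count_swapTails [Fintype ι] (P : ι → List α) (i j : ι) (z w : α) :
    ∑ k, (swapTails P i j z k).count w = ∑ k, (P k).count w := by
  simp only [swapTails, List.count_spliceAt, Finset.sum_add_distrib]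
  rw [Equiv.sum_comp (swap i j) (fun k => ((P k).dropWhile (· ≠ z)).count w),
    ← Finset.sum_add_distrib]
  simp only [← List.count_append, List.takeWhile_append_dropWhile]

theorem commonPoints_swapTails [Fintype ι] {P : ι → List α} {i j : ι} {z : α}
    (hP : ∀ k, (P k).Nodup) (hP' : ∀ k, (swapTails P i j z k).Nodup) :
    commonPoints (swapTails P i j z) = commonPoints P := by
  ext w
  rw [mem_commonPoints_iff_one_lt_sum_count hP', mem_commonPoints_iff_one_lt_sum_count hP,
    sum_count_swapTails]

def IsTailSwapClosed (F : Perm ι → Set (ι → List α)) : Prop :=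
  ∀ σ, ∀ P ∈ F σ, ∀ i j z, z ∈ P i → z ∈ P j → swapTails P i j z ∈ F (σ * swap i j)

open Classical in
noncomputable def lgvInvolution (x : Perm ι × (ι → List α)) : Perm ι × (ι → List α) :=
  if h : (commonPoints x.2).Nonempty then
    (x.1 * swap (commonPair h).1 (commonPair h).2,
      swapTails x.2 (commonPair h).1 (commonPair h).2 h.some)
  else x

theorem lgvInvolution_of_nonempty {σ : Perm ι} {P : ι → List α}
    (h : (commonPoints P).Nonempty) :
    lgvInvolution (σ, P) = (σ * swap (commonPair h).1 (commonPair h).2,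
      swapTails P (commonPair h).1 (commonPair h).2 h.some) :=
  dif_pos h

theorem lgvInvolution_lgvInvolution [Fintype ι] {x : Perm ι × (ι → List α)}
    (hP : ∀ k, (x.2 k).Nodup) (hP' : ∀ k, ((lgvInvolution x).2 k).Nodup) :
    lgvInvolution (lgvInvolution x) = x := by
  obtain ⟨σ, P⟩ := x
  by_cases h : (commonPoints P).Nonempty
  swap
  · simp [lgvInvolution, h]
  obtain ⟨-, hi, hj⟩ := commonPair_mem h
  rw [lgvInvolution_of_nonempty h] at hP' ⊢
  have hC := commonPoints_swapTails hP hP'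
  have h' : (commonPoints (swapTails P (commonPair h).1 (commonPair h).2 h.some)).Nonempty :=
    hC.symm ▸ h
  have hz : h'.some = h.some := Set.Nonempty.some_eq_of_eq h' h hC
  have hij : commonPair h' = commonPair h :=
    commonPair_eq_of_eq h' h hC (by rw [meetingPairs_swapTails hi hj])
  rw [lgvInvolution_of_nonempty h', hz, hij]
  simp only [mul_assoc, swap_mul_self, mul_one, swapTails_swapTails]

theorem sign_lgvInvolution [Fintype ι] {σ : Perm ι} {P : ι → List α}
    (h : (commonPoints P).Nonempty) : sign (lgvInvolution (σ, P)).1 = -sign σ := by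
  simp [lgvInvolution_of_nonempty h, Perm.sign_swap (commonPair_mem h).1]

theorem lgvInvolution_mem [Fintype ι] {F : Perm ι → Set (ι → List α)}
    (hnodup : ∀ σ, ∀ P ∈ F σ, ∀ k, (P k).Nodup) (hF : IsTailSwapClosed F) {σ : Perm ι}
    {P : ι → List α} (hP : P ∈ F σ) (h : (commonPoints P).Nonempty) :
    (lgvInvolution (σ, P)).2 ∈ F (lgvInvolution (σ, P)).1 ∧
      (commonPoints (lgvInvolution (σ, P)).2).Nonempty := by
  obtain ⟨-, hi, hj⟩ := commonPair_mem h
  rw [lgvInvolution_of_nonempty h]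
  have hP' := hF σ P hP _ _ _ hi hj
  exact ⟨hP', by rwa [commonPoints_swapTails (hnodup σ P hP) (hnodup _ _ hP')]⟩

theorem sum_sign_mul_card_meeting_eq_zero [Fintype ι] (F : Perm ι → Set (ι → List α))
    (hfin : ∀ σ, (F σ).Finite) (hnodup : ∀ σ, ∀ P ∈ F σ, ∀ k, (P k).Nodup)
    (hF : IsTailSwapClosed F) :
    ∑ σ, (sign σ : ℤ) * Nat.card {P // P ∈ F σ ∧ (commonPoints P).Nonempty} = 0 := by
  have (σ : Perm ι) : Fintype {P // P ∈ F σ ∧ (commonPoints P).Nonempty} :=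
    have : Finite {P // P ∈ F σ ∧ (commonPoints P).Nonempty} :=
      ((hfin σ).subset (t := {P | P ∈ F σ ∧ (commonPoints P).Nonempty})
        fun _ hP => hP.1).to_subtype
    Fintype.ofFinite _
  let g (x : Σ σ : Perm ι, {P // P ∈ F σ ∧ (commonPoints P).Nonempty}) :
      Σ σ : Perm ι, {P // P ∈ F σ ∧ (commonPoints P).Nonempty} :=
    ⟨_, _, lgvInvolution_mem hnodup hF x.2.2.1 x.2.2.2⟩
  have hg (x : Σ σ : Perm ι, {P // P ∈ F σ ∧ (commonPoints P).Nonempty}) :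
      ((sign (g x).1 : ℤˣ) : ℤ) = -sign x.1 := by
    simp [g, sign_lgvInvolution x.2.2.2]
  calc ∑ σ, (sign σ : ℤ) * Nat.card {P // P ∈ F σ ∧ (commonPoints P).Nonempty}
      = ∑ x : Σ σ : Perm ι, {P // P ∈ F σ ∧ (commonPoints P).Nonempty}, (sign x.1 : ℤ) := by
        simp [Fintype.sum_sigma, Nat.card_eq_fintype_card, mul_comm]
    _ = 0 := by
      refine Finset.sum_ninvolution g (fun x => by rw [hg]; ring) (fun x _ hgx => ?_)
        (fun _ => Finset.mem_univ _) (fun x => ?_)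
      · have := hg x
        rw [hgx] at this
        omega
      · have h := lgvInvolution_lgvInvolution (x := (x.1, x.2.1)) (hnodup _ _ x.2.2.1)
          (hnodup _ _ (g x).2.2.1)
        exact Sigma.subtype_ext (congrArg Prod.fst h) (congrArg Prod.snd h)

theorem sum_sign_mul_card_eq_sum_sign_mul_card_nonmeeting [Fintype ι]
    (F : Perm ι → Set (ι → List α)) (hfin : ∀ σ, (F σ).Finite)
    (hnodup : ∀ σ, ∀ P ∈ F σ, ∀ k, (P k).Nodup) (hF : IsTailSwapClosed F) :
    ∑ σ, (sign σ : ℤ) * Nat.card (F σ) =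
      ∑ σ, (sign σ : ℤ) * Nat.card {P // P ∈ F σ ∧ ¬(commonPoints P).Nonempty} := by
  have hsplit (σ : Perm ι) : (Nat.card (F σ) : ℤ) =
      Nat.card {P // P ∈ F σ ∧ (commonPoints P).Nonempty} +
        Nat.card {P // P ∈ F σ ∧ ¬(commonPoints P).Nonempty} := by
    exact_mod_cast (Set.ncard_inter_add_ncard_sdiff_eq_ncard (F σ)
      {P | (commonPoints P).Nonempty} (hfin σ)).symm
  simp only [hsplit, mul_add, Finset.sum_add_distrib,
    sum_sign_mul_card_meeting_eq_zero F hfin hnodup hF, zero_add]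

end LGVInvolution

namespace IsSchroderPath

def Step (u v : ℤ × ℤ) : Prop := v - u = (0, 1) ∨ v - u = (-1, 1) ∨ v - u = (-1, 0)

theorem step_iff {u v : ℤ × ℤ} : Step u v ↔
    v.1 = u.1 ∧ v.2 = u.2 + 1 ∨ v.1 = u.1 - 1 ∧ v.2 = u.2 + 1 ∨ v.1 = u.1 - 1 ∧ v.2 = u.2 := by
  simp only [Step, Prod.ext_iff, Prod.fst_sub, Prod.snd_sub]
  omega

def Before (u v : ℤ × ℤ) : Prop := v.1 ≤ u.1 ∧ u.2 ≤ v.2 ∧ u.2 - u.1 < v.2 - v.1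

instance : Trans Before Before Before :=
  ⟨fun h g => ⟨g.1.trans h.1, h.2.1.trans g.2.1, h.2.2.trans g.2.2⟩⟩

variable {p q : List (ℤ × ℤ)} {src tgt src' tgt' : ℤ × ℤ}

theorem isChain (hp : IsSchroderPath p src tgt) : p.IsChain Step := hp.2.2

theorem pairwise_before (hp : IsSchroderPath p src tgt) : p.Pairwise Before :=
  List.isChain_iff_pairwise.1 <| hp.isChain.imp fun _ _ h => by
    rw [step_iff] at h; unfold Before; omega

theorem nodup (hp : IsSchroderPath p src tgt) : p.Nodup :=
  hp.pairwise_before.imp fun h heq => by subst heq; exact h.2.2.false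

theorem le_of_mem (hp : IsSchroderPath p src tgt) {u : ℤ × ℤ} (hu : u ∈ p) :
    u.1 ≤ src.1 ∧ src.2 ≤ u.2 := by
  refine hp.isChain.induction (fun u => u.1 ≤ src.1 ∧ src.2 ≤ u.2) p
    (fun x y h hx => by rw [step_iff] at h; omega) (fun hne => ?_) u hu
  rw [(List.head_eq_iff_head?_eq_some hne).2 hp.1]
  exact ⟨le_rfl, le_rfl⟩

theorem ge_of_mem (hp : IsSchroderPath p src tgt) {u : ℤ × ℤ} (hu : u ∈ p) :
    tgt.1 ≤ u.1 ∧ u.2 ≤ tgt.2 := by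
  refine hp.isChain.backwards_induction (fun u => tgt.1 ≤ u.1 ∧ u.2 ≤ tgt.2) p
    (fun x y h hy => by rw [step_iff] at h; omega) (fun hne => ?_) u hu
  rw [List.getLast_of_mem_getLast? hp.2.1]
  exact ⟨le_rfl, le_rfl⟩

theorem fst_le_of_snd_lt (hp : IsSchroderPath p src tgt) {u v : ℤ × ℤ} (hu : u ∈ p)
    (hv : v ∈ p) (h : u.2 < v.2) : v.1 ≤ u.1 := by
  have : Std.Symm fun a b : ℤ × ℤ => Before a b ∨ Before b a := ⟨fun _ _ => Or.symm⟩
  rcases (hp.pairwise_before.imp (S := fun a b => Before a b ∨ Before b a) Or.inl).forall hu hv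
    (by rintro rfl; omega) with h' | h'
  · exact h'.1
  · have := h'.2.1; omega

theorem exists_mem_snd_eq (hp : IsSchroderPath p src tgt) {y : ℤ} (h₁ : src.2 ≤ y)
    (h₂ : y ≤ tgt.2) : ∃ u ∈ p, u.2 = y := by
  by_cases hy : y = src.2
  · exact ⟨src, List.mem_of_mem_head? hp.1, hy.symm⟩
  obtain ⟨u, -, v, hv, huv, hu, hv'⟩ := hp.isChain.exists_rel_not_and (C := fun u => y ≤ u.2)
    hp.1 (List.mem_of_mem_getLast? hp.2.1) (by omega) h₂
  rw [step_iff] at huv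
  exact ⟨v, hv, by omega⟩

theorem setOf_finite (src tgt : ℤ × ℤ) : {p | IsSchroderPath p src tgt}.Finite :=
  (List.finite_setOf_nodup_forall_mem (Set.finite_Icc (tgt.1, src.2) (src.1, tgt.2))).subset
    fun p hp => ⟨hp.nodup, fun u hu => by
      have := hp.le_of_mem hu; have := hp.ge_of_mem hu
      simp only [Set.mem_Icc, Prod.le_def]; omega⟩

protected theorem spliceAt (hp : IsSchroderPath p src tgt) (hq : IsSchroderPath q src' tgt')
    {z : ℤ × ℤ} (hzp : z ∈ p) (hzq : z ∈ q) : IsSchroderPath (p.spliceAt q z) src tgt' :=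
  ⟨(List.head?_spliceAt hzp hzq).trans hp.1, (List.getLast?_spliceAt hzq).trans hq.2.1,
    hp.isChain.spliceAt hq.isChain hzp hzq⟩

/-- Follow `q` from its start, strictly right of `p`, to its end, weakly left of `p` at its height:
the first step that gets weakly left of `p` lands on `p`. -/
theorem exists_mem_mem_of_lt_of_lt {a b c d e f : ℤ} (hp : IsSchroderPath p (a, e) (f, c))
    (hq : IsSchroderPath q (b, e) (f, d)) (hab : a < b) (hdc : d < c) : ∃ z ∈ p, z ∈ q := by
  let C (v : ℤ × ℤ) : Prop := ∃ w ∈ p, w.2 = v.2 ∧ v.1 ≤ w.1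
  have hstart : ¬C (b, e) := fun ⟨w, hw, _, hbw⟩ => by
    have := (hp.le_of_mem hw).1; simp only at this hbw; omega
  have hend : C (f, d) := by
    have hd := (hq.le_of_mem (List.mem_of_mem_getLast? hq.2.1)).2
    obtain ⟨w, hw, hwd⟩ := hp.exists_mem_snd_eq hd hdc.le
    exact ⟨w, hw, hwd, (hp.ge_of_mem hw).1⟩
  obtain ⟨u, hu, v, hv, huv, hCu, w, hw, hw2, hvw⟩ :=
    hq.isChain.exists_rel_not_and hq.1 (List.mem_of_mem_getLast? hq.2.1) hstart hend
  simp only [C, not_exists, not_and, not_le] at hCu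
  rw [step_iff] at huv
  have hwu : w.1 < u.1 := by
    by_cases hlevel : v.2 = u.2
    · exact hCu w hw (by omega)
    · have hu0 := (hq.le_of_mem hu).2
      have hwc := (hp.ge_of_mem hw).2
      obtain ⟨w', hw', hw'u⟩ := hp.exists_mem_snd_eq (y := u.2) hu0 (by simp only at hwc ⊢; omega)
      have := hp.fst_le_of_snd_lt hw' hw (by omega)
      have := hCu w' hw' hw'u
      omega
  have hwv : w = v := Prod.ext (by omega) hw2
  exact ⟨w, hw, hwv ▸ hv⟩

end IsSchroderPath

section SchroderFamilies

variable {ι : Type*}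

def schroderFamilies (src tgt : ι → ℤ × ℤ) (σ : Perm ι) : Set (ι → List (ℤ × ℤ)) :=
  {P | ∀ i, IsSchroderPath (P i) (src i) (tgt (σ i))}

theorem schroderFamilies_finite [Finite ι] (src tgt : ι → ℤ × ℤ) (σ : Perm ι) :
    (schroderFamilies src tgt σ).Finite :=
  (Set.Finite.pi fun i => IsSchroderPath.setOf_finite (src i) (tgt (σ i))).subset
    fun _ hP i _ => hP i

theorem isTailSwapClosed_schroderFamilies [DecidableEq ι] (src tgt : ι → ℤ × ℤ) :
    IsTailSwapClosed (schroderFamilies src tgt) := by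
  intro σ P hP i j z hi hj k
  by_cases hk : swap i j k = k
  · simpa [swapTails, hk] using hP k
  obtain ⟨-, rfl | rfl⟩ := swap_apply_ne_self_iff.1 hk
  · simpa [swapTails] using (hP k).spliceAt (hP _) hi (by simpa using hj)
  · simpa [swapTails] using (hP k).spliceAt (hP _) hj (by simpa using hi)

end SchroderFamilies

theorem Equiv.Perm.exists_lt_and_lt_of_ne_one {ι : Type*} [LinearOrder ι] [WellFoundedLT ι]
    {π : Perm ι} (hπ : π ≠ 1) : ∃ i j, i < j ∧ π j < π i := by
  by_contra! h
  have hmono : StrictMono π := fun i j hij => (h i j hij).lt_of_ne (π.injective.ne hij.ne)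
  exact hπ (DFunLike.coe_injective ((hmono.range_inj strictMono_id).1 (by simp)))

theorem commonPoints_nonempty_of_ne_one {ι : Type*} [LinearOrder ι] [WellFoundedLT ι]
    {s t : ι → ℤ} (hs : StrictMono s) (ht : StrictMono t) {e f : ℤ} {π : Perm ι} (hπ : π ≠ 1)
    {P : ι → List (ℤ × ℤ)} (hP : P ∈ schroderFamilies (fun i => (s i, e)) (fun i => (f, t i)) π) :
    (commonPoints P).Nonempty := by
  obtain ⟨i, j, hij, hji⟩ := π.exists_lt_and_lt_of_ne_one hπ
  obtain ⟨z, hzi, hzj⟩ := (hP i).exists_mem_mem_of_lt_of_lt (hP j) (hs hij) (ht hji)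
  exact ⟨z, (i, j), hij.ne, hzi, hzj⟩

theorem lgv_cancellation (n : ℕ) :
    (∑ π : Equiv.Perm (Fin n), (Equiv.Perm.sign π : ℤ) *
        (Nat.card {P : Fin n → List (ℤ × ℤ) //
            ∀ i : Fin n, IsSchroderPath (P i) ((i : ℤ), 0) (0, ((π i : ℕ) : ℤ))} : ℤ))
      = (Nat.card {P : Fin n → List (ℤ × ℤ) //
          (∀ i : Fin n, IsSchroderPath (P i) ((i : ℤ), 0) (0, (i : ℤ))) ∧
          ∀ i j : Fin n, i ≠ j → ∀ x : ℤ × ℤ, x ∈ P i → x ∉ P j} : ℤ) := by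
  set F := schroderFamilies (fun i : Fin n => ((i : ℤ), 0)) (fun i => (0, (i : ℤ)))
  have hval : StrictMono fun i : Fin n => (i : ℤ) := Nat.strictMono_cast.comp Fin.val_strictMono
  have hF := sum_sign_mul_card_eq_sum_sign_mul_card_nonmeeting F (schroderFamilies_finite _ _)
    (fun _ _ hP k => (hP k).nodup) (isTailSwapClosed_schroderFamilies _ _)
  refine hF.trans ((Finset.sum_eq_single 1 (fun π _ hπ => ?_) (by simp)).trans ?_)
  · have : IsEmpty {P // P ∈ F π ∧ ¬(commonPoints P).Nonempty} :=
      ⟨fun ⟨_, hP, h⟩ => h (commonPoints_nonempty_of_ne_one hval hval hπ hP)⟩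
    simp
  · rw [Perm.sign_one, Units.val_one, one_mul, Nat.cast_inj]
    exact Nat.card_congr (Equiv.subtypeEquivRight fun P => by
      rw [not_nonempty_commonPoints_iff]; rfl)
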